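/- Let q ∈ ℂ with 0 < |q| < 1. The map χ ↦ (χ(α), Re(χ(z))) is a bijection from the set of characters of A_q (unital ℂ-algebra homomorphisms χ: A_q → ℂ with χ(a*) = conj(χ(a)) for all a) onto the set {(a, t) ∈ ℂ × ℝ : |a|² + t² = 1}, which is homeomorphic to the 2-sphere S². -/

import Mathlib

/-!
By the universal property, a character of `A_q` is the same as a solution `(a, b, t) ∈ ℂ³` of
the relations (s4rel) in the commutative algebra `ℂ`. There the two quadratic relations become
`|a|² + |q|²|b|² + t² = 1 = |a|² + |b|² + t²`, so `|q| < 1` forces `b = 0`; `z* = z` makes `t`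
real, and every remaining relation holds automatically. Hence the solutions are exactly
`(a, 0, t)` with `|a|² + t² = 1`, which is the unit sphere of `ℂ × ℝ ≅ ℝ³`.
-/

/-- The relations (s4rel) defining the quantum 4-sphere `S⁴_q`:
`z* = z`, `zα = αz`, `zβ = βz`, `βα = conj(q)·αβ`, `β*α = q·αβ*`, `ββ* = β*β`,
`α*α + |q|²·β*β + z² = 1`, `αα* + ββ* + z² = 1`, where `|q|² = q·conj q`. -/
def S4Rel {A : Type*} [Ring A] [Algebra ℂ A] [StarRing A] [StarModule ℂ A]
    (q : ℂ) (α β z : A) : Prop :=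
  star z = z ∧ z * α = α * z ∧ z * β = β * z ∧
    β * α = (starRingEnd ℂ) q • (α * β) ∧
    star β * α = q • (α * star β) ∧
    β * star β = star β * β ∧
    star α * α + (q * (starRingEnd ℂ) q) • (star β * β) + z ^ 2 = 1 ∧
    α * star α + β * star β + z ^ 2 = 1

/-- `A` (with marked elements `α, β, z`) is *the* universal unital complex *-algebra on
generators `α, β, z` subject to the relations (s4rel) with parameter `q`, i.e. the
algebra `A_q` of the quantum 4-sphere `S⁴_q`: the generators satisfy the relations, and
for any unital complex *-algebra with elements satisfying the relations there is a unique
unital *-algebra homomorphism sending generators to those elements. -/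
def IsUniversalS4 (q : ℂ) (A : Type) [Ring A] [Algebra ℂ A] [StarRing A]
    [StarModule ℂ A] (α β z : A) : Prop :=
  S4Rel q α β z ∧
    ∀ (B : Type) [Ring B] [Algebra ℂ B] [StarRing B] [StarModule ℂ B],
      ∀ a b c : B, S4Rel q a b c →
        ∃! φ : A →⋆ₐ[ℂ] B, φ α = a ∧ φ β = b ∧ φ z = c

theorem S4Rel.map {A B : Type*} [Ring A] [Algebra ℂ A] [StarRing A] [StarModule ℂ A]
    [Ring B] [Algebra ℂ B] [StarRing B] [StarModule ℂ B]
    {q : ℂ} {α β z : A} (hrel : S4Rel q α β z) (φ : A →⋆ₐ[ℂ] B) :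
    S4Rel q (φ α) (φ β) (φ z) := by
  obtain ⟨h1, h2, h3, h4, h5, h6, h7, h8⟩ := hrel
  refine ⟨?_, ?_, ?_, ?_, ?_, ?_, ?_, ?_⟩
  · rw [← map_star, h1]
  · rw [← map_mul, ← map_mul, h2]
  · rw [← map_mul, ← map_mul, h3]
  · rw [← map_mul, h4, map_smul, map_mul]
  · rw [← map_star, ← map_mul, h5, map_smul, map_mul, map_star]
  · rw [← map_star, ← map_mul, ← map_mul, h6]
  · simpa only [map_add, map_mul, map_smul, map_pow, map_star, map_one] using congrArg φ h7
  · simpa only [map_add, map_mul, map_pow, map_star, map_one] using congrArg φ h8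

theorem s4Rel_complex_iff {q : ℂ} (hq : ‖q‖ < 1) {a b c : ℂ} :
    S4Rel q a b c ↔ b = 0 ∧ c.im = 0 ∧ ‖a‖ ^ 2 + c.re ^ 2 = 1 := by
  constructor
  · rintro ⟨hc, -, -, -, -, -, h7, h8⟩
    have hc : (c.re : ℂ) = c := Complex.conj_eq_iff_re.mp hc
    rw [← hc] at h7 h8
    simp only [Complex.star_def, smul_eq_mul, Complex.conj_mul', Complex.mul_conj'] at h7 h8
    norm_cast at h7 h8
    have hq2 : ‖q‖ ^ 2 < 1 := pow_lt_one₀ (norm_nonneg q) hq two_ne_zero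
    have hb : (1 - ‖q‖ ^ 2) * ‖b‖ ^ 2 = 0 := by linarith
    replace hb := (mul_eq_zero.mp hb).resolve_left (sub_ne_zero.mpr hq2.ne')
    refine ⟨by simpa using hb, ?_, by linarith⟩
    rw [← hc, Complex.ofReal_im]
  · rintro ⟨rfl, him, hsum⟩
    rw [show c = (c.re : ℂ) from Complex.ext rfl (by simp [him])]
    refine ⟨Complex.conj_ofReal _, mul_comm _ _, mul_comm _ _, by simp, by simp, by simp, ?_, ?_⟩
    all_goals
      simp only [Complex.star_def, star_zero, mul_zero, smul_zero, add_zero,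
        Complex.conj_mul', Complex.mul_conj']
      exact_mod_cast hsum

theorem IsUniversalS4.starAlgHom_ext {q : ℂ} {A : Type} [Ring A] [Algebra ℂ A] [StarRing A]
    [StarModule ℂ A] {α β z : A} (h : IsUniversalS4 q A α β z)
    {B : Type} [Ring B] [Algebra ℂ B] [StarRing B] [StarModule ℂ B] {φ ψ : A →⋆ₐ[ℂ] B}
    (hα : φ α = ψ α) (hβ : φ β = ψ β) (hz : φ z = ψ z) : φ = ψ :=
  (h.2 B _ _ _ (h.1.map φ)).unique ⟨rfl, rfl, rfl⟩ ⟨hα.symm, hβ.symm, hz.symm⟩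

noncomputable def complexProdRealEquivEuclidean : (ℂ × ℝ) ≃L[ℝ] EuclideanSpace ℝ (Fin 3) :=
  LinearEquiv.toContinuousLinearEquiv
    { toFun p := !₂[p.1.re, p.1.im, p.2]
      map_add' p p' := by ext i; fin_cases i <;> simp
      map_smul' c p := by ext i; fin_cases i <;> simp
      invFun v := (⟨v 0, v 1⟩, v 2)
      left_inv p := by simp
      right_inv v := by ext i; fin_cases i <;> simp }

theorem norm_complexProdRealEquivEuclidean_sq (p : ℂ × ℝ) :
    ‖complexProdRealEquivEuclidean p‖ ^ 2 = ‖p.1‖ ^ 2 + p.2 ^ 2 := by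
  simp only [complexProdRealEquivEuclidean, LinearEquiv.coe_toContinuousLinearEquiv',
    LinearEquiv.coe_mk, LinearMap.coe_mk, AddHom.coe_mk, EuclideanSpace.norm_sq_eq,
    Real.norm_eq_abs, sq_abs, Fin.sum_univ_three, Matrix.cons_val_zero, Matrix.cons_val_one,
    Matrix.cons_val, Complex.sq_norm, Complex.normSq_apply]
  ring

noncomputable def complexProdRealSphereHomeomorph :
    {p : ℂ × ℝ // ‖p.1‖ ^ 2 + p.2 ^ 2 = 1} ≃ₜ Metric.sphere (0 : EuclideanSpace ℝ (Fin 3)) 1 :=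
  complexProdRealEquivEuclidean.toHomeomorph.subtype fun p => by
    rw [mem_sphere_zero_iff_norm, ← pow_eq_one_iff_of_nonneg (norm_nonneg _) two_ne_zero,
      ContinuousLinearEquiv.coe_toHomeomorph, norm_complexProdRealEquivEuclidean_sq]

theorem s4_q_character_space_general (q : ℂ) (h1 : ‖q‖ < 1)
    (A : Type) [Ring A] [Algebra ℂ A] [StarRing A] [StarModule ℂ A]
    (α β z : A) (h : IsUniversalS4 q A α β z) :
    Set.BijOn
      (fun χ : {χ : A →ₐ[ℂ] ℂ // ∀ a : A, χ (star a) = (starRingEnd ℂ) (χ a)} =>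
        ((χ : A →ₐ[ℂ] ℂ) α, ((χ : A →ₐ[ℂ] ℂ) z).re))
      Set.univ
      {p : ℂ × ℝ | ‖p.1‖ ^ 2 + p.2 ^ 2 = 1} ∧
    Nonempty
      (({p : ℂ × ℝ // ‖p.1‖ ^ 2 + p.2 ^ 2 = 1}) ≃ₜ
        Metric.sphere (0 : EuclideanSpace ℝ (Fin 3)) 1) := by
  let toStarAlgHom (χ : {χ : A →ₐ[ℂ] ℂ // ∀ a : A, χ (star a) = (starRingEnd ℂ) (χ a)}) :
      A →⋆ₐ[ℂ] ℂ := ⟨χ.1, χ.2⟩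
  have values χ := (s4Rel_complex_iff h1).1 (h.1.map (toStarAlgHom χ))
  refine ⟨⟨fun χ _ => (values χ).2.2, ?injOn, ?surjOn⟩, ⟨complexProdRealSphereHomeomorph⟩⟩
  case injOn =>
    rintro χ₁ - χ₂ - heq
    obtain ⟨hα, hz⟩ := Prod.mk.inj heq
    obtain ⟨hβ₁, hz₁, -⟩ := values χ₁
    obtain ⟨hβ₂, hz₂, -⟩ := values χ₂
    have := h.starAlgHom_ext (φ := toStarAlgHom χ₁) (ψ := toStarAlgHom χ₂) hα
      (hβ₁.trans hβ₂.symm) (Complex.ext hz (hz₁.trans hz₂.symm))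
    exact Subtype.ext (AlgHom.ext fun x => DFunLike.congr_fun this x)
  case surjOn =>
    rintro ⟨a, t⟩ hp
    obtain ⟨φ, ⟨hα, -, hz⟩, -⟩ :=
      h.2 ℂ a 0 t ((s4Rel_complex_iff h1).2 ⟨rfl, Complex.ofReal_im t, by simpa using hp⟩)
    exact ⟨⟨φ.toAlgHom, map_star φ⟩, trivial, by simp [hα, hz]⟩

/-- For `0 < |q| < 1`, the map `χ ↦ (χ(α), Re χ(z))` is a bijection from
the set of characters of `A_q` onto `{(a, t) ∈ ℂ × ℝ : |a|² + t² = 1}`, a set which is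
homeomorphic to the 2-sphere `S²`. -/
theorem s4_q_character_space (q : ℂ) (h0 : 0 < ‖q‖) (h1 : ‖q‖ < 1)
    (A : Type) [Ring A] [Algebra ℂ A] [StarRing A] [StarModule ℂ A]
    (α β z : A) (h : IsUniversalS4 q A α β z) :
    Set.BijOn
      (fun χ : {χ : A →ₐ[ℂ] ℂ // ∀ a : A, χ (star a) = (starRingEnd ℂ) (χ a)} =>
        ((χ : A →ₐ[ℂ] ℂ) α, ((χ : A →ₐ[ℂ] ℂ) z).re))
      Set.univ
      {p : ℂ × ℝ | ‖p.1‖ ^ 2 + p.2 ^ 2 = 1} ∧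
    Nonempty
      (({p : ℂ × ℝ // ‖p.1‖ ^ 2 + p.2 ^ 2 = 1}) ≃ₜ
        Metric.sphere (0 : EuclideanSpace ℝ (Fin 3)) 1) :=
  s4_q_character_space_general q h1 A α β z h
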